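/- arXiv:2402.18697 — 4 statements merged into one kernel-verified Lean document; each statement's English description precedes it below -/
import Mathlib

section
/- Let $X$ be an $m \times n$ matrix with nonnegative entries, and let $Y^1, Y^2$ be two biproportional scalings of $X$ (i.e., $Y^k = D^k_0 X D^k_1$ for positive diagonal matrices $D^k_0, D^k_1$). If $Y^1$ and $Y^2$ have the same row sums and the same column sums, then $Y^1 = Y^2$. -/
open Finset

lemma aux_nonneg (t : ℝ) (ht : 0 < t) : 0 ≤ (t - 1) * Real.log t := by
  rcases le_or_gt 1 t with h | h
  · exact mul_nonneg (by linarith) (Real.log_nonneg h)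
  · have := Real.log_nonpos ht.le h.le
    nlinarith

lemma aux_eq_one (t : ℝ) (ht : 0 < t) (h : (t - 1) * Real.log t = 0) : t = 1 := by
  rcases mul_eq_zero.mp h with h' | h'
  · linarith
  · rcases Real.log_eq_zero.mp h' with h'' | h'' | h''
    · exact absurd h'' ht.ne'
    · exact h''
    · linarith

/-- Biproportional scalings of a nonnegative matrix are uniquely determined by
their row and column sums. -/
theorem biproportional_scaling_unique {m n : ℕ}
    (X : Matrix (Fin m) (Fin n) ℝ) (hX : ∀ i j, 0 ≤ X i j)
    (d0 d1 : Fin m → ℝ) (e0 e1 : Fin n → ℝ)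
    (hd0 : ∀ i, 0 < d0 i) (hd1 : ∀ i, 0 < d1 i)
    (he0 : ∀ j, 0 < e0 j) (he1 : ∀ j, 0 < e1 j)
    (Y1 Y2 : Matrix (Fin m) (Fin n) ℝ)
    (hY1 : ∀ i j, Y1 i j = d0 i * X i j * e0 j)
    (hY2 : ∀ i j, Y2 i j = d1 i * X i j * e1 j)
    (hrow : ∀ i, ∑ j, Y1 i j = ∑ j, Y2 i j)
    (hcol : ∀ j, ∑ i, Y1 i j = ∑ i, Y2 i j) :
    Y1 = Y2 := by
  set a : Fin m → ℝ := fun i => d0 i / d1 i with ha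
  set b : Fin n → ℝ := fun j => e0 j / e1 j with hb
  have hapos : ∀ i, 0 < a i := fun i => div_pos (hd0 i) (hd1 i)
  have hbpos : ∀ j, 0 < b j := fun j => div_pos (he0 j) (he1 j)
  have hrel : ∀ i j, Y1 i j = a i * b j * Y2 i j := by
    intro i j
    rw [hY1, hY2, ha, hb]
    simp only
    rw [div_mul_div_comm, div_mul_eq_mul_div, eq_comm, div_eq_iff (mul_pos (hd1 i) (he1 j)).ne']
    ring
  have hrowz : ∀ i, ∑ j, Y2 i j * (a i * b j - 1) = 0 := by
    intro i
    have h1 : ∑ j, Y2 i j * (a i * b j - 1) = (∑ j, Y1 i j) - ∑ j, Y2 i j := by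
      rw [← Finset.sum_sub_distrib]
      refine Finset.sum_congr rfl fun j _ => ?_
      rw [hrel]; ring
    rw [h1, hrow i, sub_self]
  have hcolz : ∀ j, ∑ i, Y2 i j * (a i * b j - 1) = 0 := by
    intro j
    have h1 : ∑ i, Y2 i j * (a i * b j - 1) = (∑ i, Y1 i j) - ∑ i, Y2 i j := by
      rw [← Finset.sum_sub_distrib]
      refine Finset.sum_congr rfl fun i _ => ?_
      rw [hrel]; ring
    rw [h1, hcol j, sub_self]
  have hS : ∑ i, ∑ j, Y2 i j * (a i * b j - 1) * (Real.log (a i) + Real.log (b j)) = 0 := by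
    have hsplit : ∀ i j, Y2 i j * (a i * b j - 1) * (Real.log (a i) + Real.log (b j))
        = Real.log (a i) * (Y2 i j * (a i * b j - 1))
          + Real.log (b j) * (Y2 i j * (a i * b j - 1)) := by
      intro i j; ring
    have e1' : ∑ i, ∑ j, Real.log (a i) * (Y2 i j * (a i * b j - 1)) = 0 := by
      simp only [← Finset.mul_sum]
      simp [hrowz]
    have e2' : ∑ i, ∑ j, Real.log (b j) * (Y2 i j * (a i * b j - 1)) = 0 := by
      rw [Finset.sum_comm]
      simp only [← Finset.mul_sum]
      simp [hcolz]
    calc ∑ i, ∑ j, Y2 i j * (a i * b j - 1) * (Real.log (a i) + Real.log (b j))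
        = (∑ i, ∑ j, Real.log (a i) * (Y2 i j * (a i * b j - 1)))
          + ∑ i, ∑ j, Real.log (b j) * (Y2 i j * (a i * b j - 1)) := by
          rw [← Finset.sum_add_distrib]
          refine Finset.sum_congr rfl fun i _ => ?_
          rw [← Finset.sum_add_distrib]
          exact Finset.sum_congr rfl fun j _ => hsplit i j
      _ = 0 := by rw [e1', e2', add_zero]
  have hterm : ∀ i j, 0 ≤ Y2 i j * (a i * b j - 1) * (Real.log (a i) + Real.log (b j)) := by
    intro i j
    have hY2nn : 0 ≤ Y2 i j := by
      rw [hY2]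
      exact mul_nonneg (mul_nonneg (hd1 i).le (hX i j)) (he1 j).le
    have hlog : Real.log (a i) + Real.log (b j) = Real.log (a i * b j) := by
      rw [Real.log_mul (hapos i).ne' (hbpos j).ne']
    rw [mul_assoc, hlog]
    exact mul_nonneg hY2nn (aux_nonneg _ (mul_pos (hapos i) (hbpos j)))
  have hzero : ∀ i ∈ Finset.univ, ∀ j ∈ Finset.univ,
      Y2 i j * (a i * b j - 1) * (Real.log (a i) + Real.log (b j)) = 0 := by
    have houter := (Finset.sum_eq_zero_iff_of_nonneg
      (fun i _ => Finset.sum_nonneg (fun j _ => hterm i j))).mp hS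
    intro i hi
    exact fun j hj => (Finset.sum_eq_zero_iff_of_nonneg
      (fun j _ => hterm i j)).mp (houter i hi) j hj
  ext i j
  have hz := hzero i (Finset.mem_univ i) j (Finset.mem_univ j)
  rcases eq_or_ne (Y2 i j) 0 with h0 | h0
  · have hXz : X i j = 0 := by
      rw [hY2] at h0
      have := mul_eq_zero.mp h0
      rcases this with h | h
      · rcases mul_eq_zero.mp h with h | h
        · exact absurd h (hd1 i).ne'
        · exact h
      · exact absurd h (he1 j).ne'
    rw [hY1, hY2, hXz]; ring
  · have hlog : Real.log (a i) + Real.log (b j) = Real.log (a i * b j) :=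
      (Real.log_mul (hapos i).ne' (hbpos j).ne').symm
    rw [mul_assoc, hlog] at hz
    have hprod : (a i * b j - 1) * Real.log (a i * b j) = 0 :=
      (mul_eq_zero.mp hz).resolve_left h0
    have hone : a i * b j = 1 := aux_eq_one _ (mul_pos (hapos i) (hbpos j)) hprod
    rw [hrel, hone, one_mul]
end

section
/- Let $X \in \mathbb{R}_{\ge 0}^{m \times n}$, and suppose there exists a subset $S \subseteq [m]$ with $\sum_{i \in S} p_i > \sum_{j \in N_X(S)} q_j$ (a blocking set). Then there is no pair of positive diagonal matrices $D^0, D^1$ such that $D^0 X D^1$ has row sums $p$ and column sums $q$. -/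
open Finset

/-- If there is a blocking set `S` of rows, i.e. `∑_{i ∈ S} pᵢ > ∑_{j ∈ N_X(S)} qⱼ`,
then the matrix balancing problem has no solution: there are no positive diagonal
scalings `D⁰ X D¹` with row sums `p` and column sums `q`. -/
theorem no_balancing_of_blocking_set {m n : ℕ}
    (X : Matrix (Fin m) (Fin n) ℝ) (hX : ∀ i j, 0 ≤ X i j)
    (p : Fin m → ℝ) (q : Fin n → ℝ)
    (hp : ∀ i, 0 ≤ p i) (hq : ∀ j, 0 ≤ q j)
    (S : Finset (Fin m))
    (hblock : ∑ j ∈ Finset.univ.filter (fun j => ∃ i ∈ S, 0 < X i j), q j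
      < ∑ i ∈ S, p i) :
    ¬ ∃ (d0 : Fin m → ℝ) (d1 : Fin n → ℝ),
        (∀ i, 0 < d0 i) ∧ (∀ j, 0 < d1 j) ∧
        (∀ i, ∑ j, d0 i * X i j * d1 j = p i) ∧
        (∀ j, ∑ i, d0 i * X i j * d1 j = q j) := by
  rintro ⟨d0, d1, hd0, hd1, hrow, hcol⟩
  set N : Finset (Fin n) := Finset.univ.filter (fun j => ∃ i ∈ S, 0 < X i j) with hN
  have key : ∑ i ∈ S, p i ≤ ∑ j ∈ N, q j := by
    calc ∑ i ∈ S, p i = ∑ i ∈ S, ∑ j, d0 i * X i j * d1 j := by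
            simp [hrow]
      _ = ∑ j, ∑ i ∈ S, d0 i * X i j * d1 j := Finset.sum_comm
      _ = ∑ j ∈ N, ∑ i ∈ S, d0 i * X i j * d1 j := by
            rw [← Finset.sum_filter_add_sum_filter_not Finset.univ
              (fun j => ∃ i ∈ S, 0 < X i j)]
            have : ∑ j ∈ Finset.univ.filter (fun j => ¬ ∃ i ∈ S, 0 < X i j),
                ∑ i ∈ S, d0 i * X i j * d1 j = 0 := by
              apply Finset.sum_eq_zero
              intro j hj
              simp only [Finset.mem_filter, Finset.mem_univ, true_and] at hj
              push_neg at hj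
              apply Finset.sum_eq_zero
              intro i hi
              have : X i j = 0 := le_antisymm (hj i hi) (hX i j)
              simp [this]
            rw [this, add_zero]
      _ ≤ ∑ j ∈ N, ∑ i, d0 i * X i j * d1 j := by
            apply Finset.sum_le_sum
            intro j _
            apply Finset.sum_le_sum_of_subset_of_nonneg (Finset.subset_univ S)
            intro i _ _
            exact mul_nonneg (mul_nonneg (hd0 i).le (hX i j)) (hd1 j).le
      _ = ∑ j ∈ N, q j := by simp [hcol]
  exact absurd key (not_le.mpr hblock)
end

section
/- Let $g : \mathbb{R}^d \to \mathbb{R}$ be twice continuously differentiable, let $x^*, x \in \mathbb{R}^d$ with $g(x) \le g(x^*)$, and suppose that for all $y$ on the segment between $x^*$ and $x$, the Hessian satisfies $w^T \nabla^2 g(y) w \ge \mu \|w\|^2$ for all $w$ in a linear subspace $V$ containing $x - x^*$, where $\mu > 0$. Then $\|\nabla g(x^*)\| \ge \frac{\mu}{2} \|x - x^*\|$. -/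
open Set AffineMap InnerProductSpace

/-! Restrict `g` to the line `t ↦ x* + t (x - x*)`. The second derivative along it is at least
`μ ‖x - x*‖²` on `[0, 1]`, so `g x ≥ g x* + ⟪∇g x*, x - x*⟫ + μ ‖x - x*‖² / 2`. With `g x ≤ g x*`
this gives `μ ‖x - x*‖² / 2 ≤ -⟪∇g x*, x - x*⟫ ≤ ‖∇g x*‖ ‖x - x*‖` by Cauchy–Schwarz. -/

theorem monotoneOn_Icc_of_hasDerivAt_nonneg {f f' : ℝ → ℝ} {a b : ℝ}
    (hf : ∀ t, HasDerivAt f (f' t) t) (hf' : ∀ t ∈ Ioo a b, 0 ≤ f' t) :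
    MonotoneOn f (Icc a b) := by
  refine monotoneOn_of_hasDerivWithinAt_nonneg (convex_Icc a b)
    (fun t _ => (hf t).continuousAt.continuousWithinAt) (fun t _ => (hf t).hasDerivWithinAt) ?_
  rwa [interior_Icc]

theorem deriv_add_half_le_sub_of_le_deriv2 {φ φ' φ'' : ℝ → ℝ} {m : ℝ}
    (hφ : ∀ t, HasDerivAt φ (φ' t) t) (hφ' : ∀ t, HasDerivAt φ' (φ'' t) t)
    (hm : ∀ t ∈ Icc (0 : ℝ) 1, m ≤ φ'' t) :
    φ' 0 + m / 2 ≤ φ 1 - φ 0 := by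
  have hφ'_sub : MonotoneOn (fun t => φ' t - m * t) (Icc 0 1) := by
    refine monotoneOn_Icc_of_hasDerivAt_nonneg
      (fun t => ((hφ' t).sub ((hasDerivAt_id' t).const_mul m)).congr_deriv (by rw [mul_one])) ?_
    exact fun t ht => sub_nonneg.2 (hm t (Ioo_subset_Icc_self ht))
  have hφ_sub : MonotoneOn (fun t => φ t - φ' 0 * t - m / 2 * t ^ 2) (Icc 0 1) := by
    refine monotoneOn_Icc_of_hasDerivAt_nonneg (f' := fun t => φ' t - φ' 0 - m * t)
      (fun t => (((hφ t).sub ((hasDerivAt_id' t).const_mul (φ' 0))).sub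
        ((hasDerivAt_pow 2 t).const_mul (m / 2))).congr_deriv (by push_cast; ring)) ?_
    intro t ht
    have := hφ'_sub (left_mem_Icc.2 zero_le_one) (Ioo_subset_Icc_self ht) ht.1.le
    simp only [mul_zero, sub_zero] at this
    linarith
  have := hφ_sub (left_mem_Icc.2 zero_le_one) (right_mem_Icc.2 zero_le_one) zero_le_one
  simp only at this
  linarith

theorem add_fderiv_add_half_le_of_le_fderiv_fderiv {E : Type*} [NormedAddCommGroup E]
    [NormedSpace ℝ E] {g : E → ℝ} {a b : E} {m : ℝ}
    (hg : Differentiable ℝ g) (hg' : Differentiable ℝ (fderiv ℝ g))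
    (hm : ∀ y ∈ segment ℝ a b, m ≤ fderiv ℝ (fderiv ℝ g) y (b - a) (b - a)) :
    g a + fderiv ℝ g a (b - a) + m / 2 ≤ g b := by
  have hφ (t : ℝ) :
      HasDerivAt (fun t => g (lineMap a b t)) (fderiv ℝ g (lineMap a b t) (b - a)) t :=
    (hg _).hasFDerivAt.comp_hasDerivAt t hasDerivAt_lineMap
  have hφ' (t : ℝ) : HasDerivAt (fun t => fderiv ℝ g (lineMap a b t) (b - a))
      (fderiv ℝ (fderiv ℝ g) (lineMap a b t) (b - a) (b - a)) t := by
    simpa using ((hg' _).hasFDerivAt.comp_hasDerivAt t hasDerivAt_lineMap).clm_apply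
      (hasDerivAt_const t (b - a))
  have := deriv_add_half_le_sub_of_le_deriv2 hφ hφ' fun t ht =>
    hm _ (segment_eq_image_lineMap ℝ a b ▸ mem_image_of_mem _ ht)
  simp only [lineMap_apply_zero, lineMap_apply_one] at this
  linarith

theorem mul_norm_le_norm_of_mul_norm_sq_le_neg_inner {E : Type*} [NormedAddCommGroup E]
    [InnerProductSpace ℝ E] {a v : E} {c : ℝ} (h : c * ‖v‖ ^ 2 ≤ -⟪a, v⟫_ℝ) :
    c * ‖v‖ ≤ ‖a‖ := by
  rcases (norm_nonneg v).eq_or_lt with hv | hv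
  · simp [← hv]
  refine le_of_mul_le_mul_right ?_ hv
  calc c * ‖v‖ * ‖v‖ = c * ‖v‖ ^ 2 := by ring
    _ ≤ -⟪a, v⟫_ℝ := h
    _ ≤ ‖a‖ * ‖v‖ := (neg_le_abs _).trans (abs_real_inner_le_norm a v)

theorem grad_norm_ge_of_restricted_strong_convexity_general {d : ℕ}
    (g : EuclideanSpace ℝ (Fin d) → ℝ) (hg : ContDiff ℝ 2 g)
    (xstar x : EuclideanSpace ℝ (Fin d)) (hle : g x ≤ g xstar)
    (V : Submodule ℝ (EuclideanSpace ℝ (Fin d))) (hV : x - xstar ∈ V)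
    (μ : ℝ)
    (hhess : ∀ y ∈ segment ℝ xstar x, ∀ w ∈ V,
      μ * ‖w‖ ^ 2 ≤ iteratedFDeriv ℝ 2 g y ![w, w]) :
    μ / 2 * ‖x - xstar‖ ≤ ‖gradient g xstar‖ := by
  have hg₁ : Differentiable ℝ g := hg.differentiable (by norm_num)
  have hg₂ : Differentiable ℝ (fderiv ℝ g) :=
    (hg.fderiv_right (m := 1) le_rfl).differentiable one_ne_zero
  have hquad := add_fderiv_add_half_le_of_le_fderiv_fderiv hg₁ hg₂ fun y hy => by
    simpa only [iteratedFDeriv_two_apply, Matrix.cons_val_zero, Matrix.cons_val_one] using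
      hhess y hy _ hV
  rw [← inner_gradient_left] at hquad
  exact mul_norm_le_norm_of_mul_norm_sq_le_neg_inner (by linarith)

/-- Restricted strong convexity along the segment between a point `x*` and a point `x`
with `g x ≤ g x*` implies that the gradient norm at `x*` dominates the distance:
`‖∇g(x*)‖ ≥ (μ/2) ‖x - x*‖`. -/
theorem grad_norm_ge_of_restricted_strong_convexity {d : ℕ}
    (g : EuclideanSpace ℝ (Fin d) → ℝ) (hg : ContDiff ℝ 2 g)
    (xstar x : EuclideanSpace ℝ (Fin d)) (hle : g x ≤ g xstar)
    (V : Submodule ℝ (EuclideanSpace ℝ (Fin d))) (hV : x - xstar ∈ V)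
    (μ : ℝ) (hμ : 0 < μ)
    (hhess : ∀ y ∈ segment ℝ xstar x, ∀ w ∈ V,
      μ * ‖w‖ ^ 2 ≤ iteratedFDeriv ℝ 2 g y ![w, w]) :
    μ / 2 * ‖x - xstar‖ ≤ ‖gradient g xstar‖ :=
  grad_norm_ge_of_restricted_strong_convexity_general g hg xstar x hle V hV μ hhess
end

section
/- Let $X \sim \mathrm{Poisson}(\lambda)$. For all $t \ge 0$, $\Pr(|X - \lambda| \ge t) \le 2 \exp\left( \frac{-t^2}{2(\lambda + t/3)} \right)$. -/
open MeasureTheory ProbabilityTheory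
open scoped NNReal ENNReal

open Real
open scoped Nat

/-! Chernoff's method with the Poisson moment generating function `exp (r (e^θ - 1))`, using
the same tilt `θ = t / (r + t/3)` for both tails. This choice makes `r = (r + t/3)(1 - θ/3)`, so
the upper tail reduces to `(e^θ - 1 - θ)(1 - θ/3) ≤ θ²/2` and the lower one to
`e^{-θ} - 1 + θ ≤ θ²/2`; both elementary inequalities follow from sign information on
derivatives. -/

lemma nonneg_of_hasDerivAt_nonneg {f f' : ℝ → ℝ} (hf : ∀ x, HasDerivAt f (f' x) x)
    (hf' : ∀ x, 0 ≤ x → 0 ≤ f' x) (hf0 : f 0 = 0) {x : ℝ} (hx : 0 ≤ x) : 0 ≤ f x := by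
  have hmono : MonotoneOn f (Set.Ici 0) := by
    refine monotoneOn_of_hasDerivWithinAt_nonneg (convex_Ici 0)
      (fun y _ ↦ (hf y).continuousAt.continuousWithinAt) (fun y _ ↦ (hf y).hasDerivWithinAt) ?_
    rw [interior_Ici]
    exact fun y hy ↦ hf' y (le_of_lt hy)
  simpa [hf0] using hmono (Set.mem_Ici.2 le_rfl) hx hx

namespace Real

lemma exp_neg_sub_one_add_le {x : ℝ} (hx : 0 ≤ x) : exp (-x) - 1 + x ≤ x ^ 2 / 2 := by
  have hderiv (y : ℝ) : HasDerivAt (fun y ↦ y ^ 2 / 2 - (exp (-y) - 1 + y))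
      (y + exp (-y) - 1) y := by
    have := ((hasDerivAt_pow 2 y).div_const 2).sub
      ((((hasDerivAt_neg y).exp).sub_const 1).add (hasDerivAt_id' y))
    refine this.congr_deriv ?_
    ring
  have := nonneg_of_hasDerivAt_nonneg hderiv
    (fun y _ ↦ by linarith [add_one_le_exp (-y)]) (by simp) hx
  linarith

lemma exp_sub_one_sub_mul_le {x : ℝ} (hx : 0 ≤ x) :
    (exp x - 1 - x) * (1 - x / 3) ≤ x ^ 2 / 2 := by
  have hg (y : ℝ) : HasDerivAt (fun y ↦ y + 2 + (y - 2) * exp y) (1 + (y - 1) * exp y) y := by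
    have := ((hasDerivAt_id' y).add_const 2).add
      (((hasDerivAt_id' y).sub_const 2).mul (hasDerivAt_exp y))
    refine this.congr_deriv ?_
    ring
  have hg' (y : ℝ) : 0 ≤ 1 + (y - 1) * exp y := by
    have h := mul_le_mul_of_nonneg_right (add_one_le_exp (-y)) (exp_pos y).le
    rw [← exp_add, neg_add_cancel, exp_zero] at h
    linarith
  have hf (y : ℝ) : HasDerivAt (fun y ↦ y ^ 2 / 2 - (exp y - 1 - y) * (1 - y / 3))
      ((y + 2 + (y - 2) * exp y) / 3) y := by
    have := ((hasDerivAt_pow 2 y).div_const 2).sub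
      ((((hasDerivAt_exp y).sub_const 1).sub (hasDerivAt_id' y)).mul
        (((hasDerivAt_id' y).div_const 3).const_sub 1))
    refine this.congr_deriv ?_
    rw [Pi.sub_apply]
    ring
  have hg_nonneg (y : ℝ) (hy : 0 ≤ y) : 0 ≤ y + 2 + (y - 2) * exp y :=
    nonneg_of_hasDerivAt_nonneg hg (fun z _ ↦ hg' z) (by simp) hy
  have := nonneg_of_hasDerivAt_nonneg hf
    (fun y hy ↦ div_nonneg (hg_nonneg y hy) zero_le_three) (by simp) hx
  linarith

end Real

namespace ProbabilityTheory

lemma hasSum_poissonMeasure_mul_exp (r : ℝ≥0) (θ : ℝ) :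
    HasSum (fun n : ℕ ↦ exp (-r) * r ^ n / n ! * exp (θ * n)) (exp (r * (exp θ - 1))) := by
  have hterm : (fun n : ℕ ↦ exp (-r) * r ^ n / n ! * exp (θ * n)) =
      fun n ↦ exp (-r) * ((r * exp θ) ^ n / n !) := by
    ext n
    rw [mul_pow, ← exp_nat_mul, mul_comm θ]
    ring
  have hsum := (NormedSpace.expSeries_div_hasSum_exp ((r : ℝ) * exp θ)).mul_left (exp (-r))
  rwa [← exp_eq_exp_ℝ, ← exp_add, neg_add_eq_sub, ← mul_sub_one, ← hterm] at hsum

lemma integrable_exp_mul_poissonMeasure (r : ℝ≥0) (θ : ℝ) :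
    Integrable (fun n : ℕ ↦ exp (θ * n)) (poissonMeasure r) := by
  rw [integrable_poissonMeasure_iff]
  simpa only [norm_of_nonneg (exp_pos _).le] using (hasSum_poissonMeasure_mul_exp r θ).summable

lemma mgf_poissonMeasure (r : ℝ≥0) (θ : ℝ) :
    mgf (fun n : ℕ ↦ (n : ℝ)) (poissonMeasure r) θ = exp (r * (exp θ - 1)) := by
  rw [mgf, integral_poissonMeasure]
  exact (hasSum_poissonMeasure_mul_exp r θ).tsum_eq

lemma poissonMeasure_real_ge_le (r : ℝ≥0) (a : ℝ) {θ : ℝ} (hθ : 0 ≤ θ) :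
    (poissonMeasure r).real {n : ℕ | a ≤ n} ≤ exp (r * (exp θ - 1) - θ * a) := by
  have h := measure_ge_le_exp_mul_mgf a hθ (integrable_exp_mul_poissonMeasure r θ)
  rwa [mgf_poissonMeasure, ← exp_add, neg_mul, neg_add_eq_sub] at h

lemma poissonMeasure_real_le_le (r : ℝ≥0) (a : ℝ) {θ : ℝ} (hθ : 0 ≤ θ) :
    (poissonMeasure r).real {n : ℕ | n ≤ a} ≤ exp (r * (exp (-θ) - 1) + θ * a) := by
  have h := measure_le_le_exp_mul_mgf a (neg_nonpos.2 hθ)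
    (integrable_exp_mul_poissonMeasure r (-θ))
  rwa [mgf_poissonMeasure, ← exp_add, neg_neg, add_comm] at h

lemma poissonMeasure_real_ge_add_le (r : ℝ≥0) {t : ℝ} (ht : 0 ≤ t) :
    (poissonMeasure r).real {n : ℕ | r + t ≤ n} ≤ exp (-t ^ 2 / (2 * (r + t / 3))) := by
  rcases ht.eq_or_lt with rfl | ht
  · simp
  set s : ℝ := r + t / 3 with hs_def
  have hs : 0 < s := by positivity
  set θ := t / s
  have hθ : 0 ≤ θ := by positivity
  have hθs : θ * s = t := div_mul_cancel₀ t hs.ne'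
  have hr : (r : ℝ) = s * (1 - θ / 3) := by linear_combination hs_def + hθs / 3
  refine (poissonMeasure_real_ge_le r _ hθ).trans (exp_le_exp.2 ?_)
  calc r * (exp θ - 1) - θ * (r + t) = s * ((exp θ - 1 - θ) * (1 - θ / 3)) - θ * t := by
        rw [hr]; ring
    _ ≤ s * (θ ^ 2 / 2) - θ * t := by gcongr; exact exp_sub_one_sub_mul_le hθ
    _ = -t ^ 2 / (2 * s) := by rw [← hθs]; field_simp; ring

lemma poissonMeasure_real_le_sub_le (r : ℝ≥0) {t : ℝ} (ht : 0 ≤ t) :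
    (poissonMeasure r).real {n : ℕ | n ≤ r - t} ≤ exp (-t ^ 2 / (2 * (r + t / 3))) := by
  rcases ht.eq_or_lt with rfl | ht
  · simp
  set s : ℝ := r + t / 3 with hs_def
  have hs : 0 < s := by positivity
  set θ := t / s
  have hθ : 0 ≤ θ := by positivity
  have hθs : θ * s = t := div_mul_cancel₀ t hs.ne'
  refine (poissonMeasure_real_le_le r _ hθ).trans (exp_le_exp.2 ?_)
  calc r * (exp (-θ) - 1) + θ * (r - t) = r * (exp (-θ) - 1 + θ) - θ * t := by ring
    _ ≤ r * (θ ^ 2 / 2) - θ * t := by gcongr; exact exp_neg_sub_one_add_le hθ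
    _ ≤ -θ ^ 2 * s / 2 := by nlinarith [mul_nonneg (sq_nonneg θ) ht.le]
    _ = -t ^ 2 / (2 * s) := by rw [← hθs]; field_simp

end ProbabilityTheory

/-- Bernstein-type two-sided tail bound for a Poisson random variable:
`P(|X - λ| ≥ t) ≤ 2 exp(-t² / (2(λ + t/3)))` for all `t ≥ 0`. -/
theorem poisson_bernstein_tail (r : ℝ≥0) (t : ℝ) (ht : 0 ≤ t) :
    poissonMeasure r {k : ℕ | t ≤ |(k : ℝ) - r|} ≤
      ENNReal.ofReal (2 * Real.exp (-t ^ 2 / (2 * ((r : ℝ) + t / 3)))) := by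
  have hsplit : {k : ℕ | t ≤ |(k : ℝ) - r|} ⊆ {k : ℕ | r + t ≤ k} ∪ {k : ℕ | k ≤ r - t} := by
    intro k (hk : t ≤ |(k : ℝ) - r|)
    rcases le_abs'.1 hk with h | h
    · exact Or.inr (show (k : ℝ) ≤ r - t by linarith)
    · exact Or.inl (show r + t ≤ (k : ℝ) by linarith)
  rw [← ofReal_measureReal]
  refine ENNReal.ofReal_le_ofReal ?_
  calc (poissonMeasure r).real {k : ℕ | t ≤ |(k : ℝ) - r|}
      ≤ (poissonMeasure r).real ({k : ℕ | r + t ≤ k} ∪ {k : ℕ | k ≤ r - t}) :=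
        measureReal_mono hsplit
    _ ≤ (poissonMeasure r).real {k : ℕ | r + t ≤ k} +
          (poissonMeasure r).real {k : ℕ | k ≤ r - t} := measureReal_union_le _ _
    _ ≤ _ := by
        rw [two_mul]
        exact add_le_add (poissonMeasure_real_ge_add_le r ht) (poissonMeasure_real_le_sub_le r ht)
end
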